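/- Let X be a topological space and P ∈ X; assume (X,P) is Fréchet–Urysohn at P, X is T1 at P, P is non-isolated, and D_P ≠ ∅. Then there exists a maximal chain C in the inclusion-ordered family F of test sets at P such that ⋂_{A ∈ C} A is itself a test set (a 'good' maximal chain). -/

import Mathlib

/-!
Choose a maximal almost disjoint family `ℳ` of countably infinite sets converging to `P` and one
injective enumeration `T_M` of each `M ∈ ℳ`. By the Fréchet–Urysohn property every `f`
discontinuous at `P` is bounded away from `f P` along some sequence, whose range meets some
`M ∈ ℳ` in an infinite set, so `A₀ = {T_M}` is a test set. It is a minimal one: the indicator of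
`M` is discontinuous at `P`, but tends to `0` along every `T_{M'}` with `M' ≠ M`, so any test set
inside `A₀` contains `T_M`. Hence a maximal chain of test sets through `A₀` has intersection `A₀`.
-/

open Filter Topology Set

/-- The family `S_P` of sequences in `X` converging to `P`. -/
def seqTo {X : Type*} [TopologicalSpace X] (P : X) : Set (ℕ → X) :=
  {T | Tendsto T atTop (𝓝 P)}

/-- The witness family `D(f)` of sequences converging to `P` along which
`f` fails to converge to `f P`. -/
def witnessSet {X : Type*} [TopologicalSpace X] (P : X) (f : X → ℝ) : Set (ℕ → X) :=
  {T | Tendsto T atTop (𝓝 P) ∧ ¬ Tendsto (fun n => f (T n)) atTop (𝓝 (f P))}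

/-- `A` is a test set at `P`: a subfamily of `S_P` meeting the witness family `D(f)`
of every function `f` discontinuous at `P`. -/
def IsTestSet {X : Type*} [TopologicalSpace X] (P : X) (A : Set (ℕ → X)) : Prop :=
  A ⊆ seqTo P ∧ ∀ f : X → ℝ, ¬ ContinuousAt f P → (A ∩ witnessSet P f).Nonempty

/-- The family `I_P`: countably infinite subsets of `X \ {P}` that are almost contained
in every open neighborhood of `P`. -/
def rangeFamily {X : Type*} [TopologicalSpace X] (P : X) : Set (Set X) :=
  {M | M ⊆ {P}ᶜ ∧ M.Countable ∧ M.Infinite ∧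
    ∀ U : Set X, IsOpen U → P ∈ U → (M \ U).Finite}

/-- `ℳ ⊆ I_P` is a maximal almost disjoint (MAD) family: distinct members have finite
intersection, and every member of `I_P` meets some member of `ℳ` in an infinite set. -/
def IsMadFamily {X : Type*} [TopologicalSpace X] (P : X) (ℳ : Set (Set X)) : Prop :=
  ℳ ⊆ rangeFamily P ∧
    (∀ A ∈ ℳ, ∀ B ∈ ℳ, A ≠ B → (A ∩ B).Finite) ∧
    (∀ S ∈ rangeFamily P, ∃ N ∈ ℳ, (S ∩ N).Infinite)

open Function

theorem exists_maximal_isChain_mem {α : Type*} [Preorder α] {p : α → Prop} {a : α}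
    (ha : p a) :
    ∃ C : Set α, a ∈ C ∧ (∀ x ∈ C, p x) ∧ IsChain (· ≤ ·) C ∧
      ∀ C' : Set α, (∀ x ∈ C', p x) → IsChain (· ≤ ·) C' → C ⊆ C' → C' = C := by
  obtain ⟨s, has⟩ := Flag.exists_mem (⟨a, ha⟩ : Subtype p)
  let e := OrderEmbedding.subtype p
  refine ⟨e '' s, ⟨_, has, rfl⟩, ?_, s.chain_le.image e, ?_⟩
  · rintro _ ⟨x, -, rfl⟩
    exact x.2
  · intro C' hC' hC'_chain hsub
    have hs : (s : Set (Subtype p)) = e ⁻¹' C' :=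
      s.maxChain.2 (hC'_chain.preimage_embedding e) (image_subset_iff.mp hsub)
    rw [hs, image_preimage_eq_of_subset]
    exact fun x hx => ⟨⟨x, hC' x hx⟩, rfl⟩

theorem Minimal.sInter_eq_of_isChain {α : Type*} {p : Set α → Prop} {a : Set α}
    {C : Set (Set α)} (ha : Minimal p a) (hC : IsChain (· ⊆ ·) C) (hCp : ∀ x ∈ C, p x)
    (haC : a ∈ C) : ⋂₀ C = a := by
  refine (sInter_subset_of_mem haC).antisymm (subset_sInter fun b hb => ?_)
  rcases eq_or_ne a b with rfl | hab
  · rfl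
  rcases hC haC hb hab with h | h
  · exact h
  · exact ha.2 (hCp b hb) h

section TestSets

variable {X : Type*} [TopologicalSpace X] {P : X}

theorem exists_seq_tendsto_le_dist_of_not_continuousAt {Y : Type*} [PseudoMetricSpace Y]
    (hFU : ∀ A : Set X, P ∈ closure A →
      ∃ a : ℕ → X, (∀ n, a n ∈ A) ∧ Tendsto a atTop (𝓝 P))
    {f : X → Y} (hf : ¬ ContinuousAt f P) :
    ∃ ε > 0, ∃ a : ℕ → X, Tendsto a atTop (𝓝 P) ∧ ∀ n, ε ≤ dist (f (a n)) (f P) := by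
  rw [ContinuousAt, Metric.tendsto_nhds] at hf
  push Not at hf
  obtain ⟨ε, hε, hfreq⟩ := hf
  have hP : P ∈ closure {x | ε ≤ dist (f x) (f P)} := mem_closure_iff_frequently.mpr hfreq
  obtain ⟨a, haA, ha⟩ := hFU _ hP
  exact ⟨ε, hε, a, ha, haA⟩

theorem compl_mem_nhds_of_finite
    (hT1 : ∀ x : X, x ≠ P → ∃ U : Set X, IsOpen U ∧ P ∈ U ∧ x ∉ U)
    {F : Set X} (hF : F.Finite) (hPF : P ∉ F) : Fᶜ ∈ 𝓝 P := by
  rw [← biUnion_of_singleton F, compl_iUnion₂, biInter_mem hF]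
  intro x hx
  obtain ⟨U, hU, hPU, hxU⟩ := hT1 x (ne_of_mem_of_not_mem hx hPF)
  exact mem_of_superset (hU.mem_nhds hPU) (subset_compl_singleton_iff.mpr hxU)

theorem range_mem_rangeFamily
    (hT1 : ∀ x : X, x ≠ P → ∃ U : Set X, IsOpen U ∧ P ∈ U ∧ x ∉ U)
    {a : ℕ → X} (ha : Tendsto a atTop (𝓝 P)) (hne : ∀ n, a n ≠ P) :
    range a ∈ rangeFamily P := by
  refine ⟨?_, countable_range a, fun hfin => ?_, fun U hU hPU => ?_⟩
  · rintro _ ⟨n, rfl⟩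
    exact hne n
  · have hPa : P ∉ range a := fun ⟨n, hn⟩ => hne n hn
    obtain ⟨n, hn⟩ := (ha.eventually_mem (compl_mem_nhds_of_finite hT1 hfin hPa)).exists
    exact hn (mem_range_self n)
  · obtain ⟨N, hN⟩ := eventually_atTop.mp (ha.eventually_mem (hU.mem_nhds hPU))
    refine ((finite_Iio N).image a).subset ?_
    rintro _ ⟨⟨n, rfl⟩, hnU⟩
    exact ⟨n, lt_of_not_ge fun h => hnU (hN n h), rfl⟩

theorem exists_injective_range_eq_of_mem_rangeFamily {M : Set X} (hM : M ∈ rangeFamily P) :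
    ∃ T : ℕ → X, Injective T ∧ range T = M ∧ Tendsto T atTop (𝓝 P) := by
  obtain ⟨-, hMc, hMi, hMU⟩ := hM
  have := hMc.to_subtype
  have := hMi.to_subtype
  obtain ⟨_⟩ := nonempty_denumerable M
  let e : ℕ ≃ M := (Denumerable.eqv M).symm
  have he : Injective (fun n => (e n : X)) := Subtype.val_injective.comp e.injective
  refine ⟨fun n => e n, he, ?_, tendsto_nhds.mpr fun U hU hPU => ?_⟩
  · change range (Subtype.val ∘ e) = M
    rw [e.surjective.range_comp, Subtype.range_coe]
  · rw [← Nat.cofinite_eq_atTop, mem_cofinite]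
    exact ((hMU U hU hPU).preimage he.injOn).subset fun n hn => ⟨(e n).2, hn⟩

theorem exists_isMadFamily (P : X) : ∃ ℳ : Set (Set X), IsMadFamily P ℳ := by
  let S := {𝒜 : Set (Set X) | 𝒜 ⊆ rangeFamily P ∧ 𝒜.Pairwise fun A B => (A ∩ B).Finite}
  obtain ⟨ℳ, hℳ⟩ := zorn_subset S fun c hcS hc =>
    ⟨⋃₀ c, ⟨sUnion_subset fun 𝒜 h𝒜 => (hcS h𝒜).1,
      hc.pairwise_sUnion.mpr fun 𝒜 h𝒜 => (hcS h𝒜).2⟩, fun _ => subset_sUnion_of_mem⟩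
  refine ⟨ℳ, hℳ.prop.1, hℳ.prop.2, fun A hA => ?_⟩
  by_contra! h
  have hA_mem : A ∈ ℳ := hℳ.mem_of_prop_insert
    ⟨insert_subset hA hℳ.prop.1, hℳ.prop.2.insert fun B hB _ => ⟨h B hB, inter_comm B A ▸ h B hB⟩⟩
  exact (inter_self A ▸ h A hA_mem).not_infinite hA.2.2.1

theorem isTestSet_range_of_isMadFamily
    (hFU : ∀ A : Set X, P ∈ closure A →
      ∃ a : ℕ → X, (∀ n, a n ∈ A) ∧ Tendsto a atTop (𝓝 P))
    (hT1 : ∀ x : X, x ≠ P → ∃ U : Set X, IsOpen U ∧ P ∈ U ∧ x ∉ U)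
    {ℳ : Set (Set X)} (hℳ : IsMadFamily P ℳ) {T : ℳ → ℕ → X}
    (hT_range : ∀ M, range (T M) = M) (hT : ∀ M, Tendsto (T M) atTop (𝓝 P)) :
    IsTestSet P (range T) := by
  refine ⟨by rintro _ ⟨M, rfl⟩; exact hT M, fun f hf => ?_⟩
  obtain ⟨ε, hε, a, ha, hdist⟩ := exists_seq_tendsto_le_dist_of_not_continuousAt hFU hf
  have hne : ∀ n, a n ≠ P := fun n h => (hdist n).not_gt (by simpa [h] using hε)
  obtain ⟨N, hN, hinf⟩ := hℳ.2.2 _ (range_mem_rangeFamily hT1 ha hne)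
  refine ⟨T ⟨N, hN⟩, mem_range_self _, hT _, fun hconv => ?_⟩
  have hfreq : ∃ᶠ n in atTop, T ⟨N, hN⟩ n ∈ range a := by
    rw [Nat.frequently_atTop_iff_infinite]
    exact (hinf.preimage (inter_subset_right.trans (hT_range ⟨N, hN⟩).ge)).mono fun n hn => hn.1
  obtain ⟨n, hn, m, hm⟩ := ((Metric.tendsto_nhds.mp hconv ε hε).and_frequently hfreq).exists
  exact (hdist m).not_gt (by rwa [hm])

theorem range_subset_of_isTestSet_of_subset {ℳ : Set (Set X)} (hℳ : IsMadFamily P ℳ)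
    {T : ℳ → ℕ → X} (hT_inj : ∀ M, Injective (T M)) (hT_range : ∀ M, range (T M) = M)
    (hT : ∀ M, Tendsto (T M) atTop (𝓝 P)) {B : Set (ℕ → X)} (hB : IsTestSet P B)
    (hBT : B ⊆ range T) : range T ⊆ B := by
  rintro _ ⟨M, rfl⟩
  by_contra hMB
  let f : X → ℝ := (M : Set X).indicator 1
  have hfP : f P = 0 := indicator_of_notMem (fun h => (hℳ.1 M.2).1 h rfl) _
  have hf : ¬ ContinuousAt f P := by
    intro hcont
    have hfT : ∀ n, f (T M n) = 1 := fun n =>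
      indicator_of_mem (hT_range M ▸ mem_range_self n) _
    have hlim : Tendsto (fun n => f (T M n)) atTop (𝓝 (f P)) := hcont.tendsto.comp (hT M)
    simp only [hfT, hfP] at hlim
    exact one_ne_zero (tendsto_const_nhds_iff.mp hlim)
  obtain ⟨_, hT'B, -, hT'_not_tendsto⟩ := hB.2 f hf
  obtain ⟨M', rfl⟩ := hBT hT'B
  have hM' : M' ≠ M := fun h => hMB (h ▸ hT'B)
  have hfin : (T M' ⁻¹' M).Finite := by
    have := (hℳ.2.1 M' M'.2 M M.2 (Subtype.coe_ne_coe.mpr hM')).preimage (hT_inj M').injOn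
    rwa [preimage_inter, ← hT_range M', preimage_range, univ_inter] at this
  refine hT'_not_tendsto (hfP ▸ tendsto_const_nhds.congr' ?_)
  rw [← Nat.cofinite_eq_atTop]
  exact hfin.eventually_cofinite_notMem.mono fun n hn =>
    (indicator_of_notMem (s := (M : Set X)) hn 1).symm

theorem exists_minimal_isTestSet
    (hFU : ∀ A : Set X, P ∈ closure A →
      ∃ a : ℕ → X, (∀ n, a n ∈ A) ∧ Tendsto a atTop (𝓝 P))
    (hT1 : ∀ x : X, x ≠ P → ∃ U : Set X, IsOpen U ∧ P ∈ U ∧ x ∉ U) :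
    ∃ A : Set (ℕ → X), Minimal (IsTestSet P) A := by
  obtain ⟨ℳ, hℳ⟩ := exists_isMadFamily P
  choose T hT_inj hT_range hT using fun M : ℳ =>
    exists_injective_range_eq_of_mem_rangeFamily (hℳ.1 M.2)
  exact ⟨range T, isTestSet_range_of_isMadFamily hFU hT1 hℳ hT_range hT,
    fun _ hB hBT => range_subset_of_isTestSet_of_subset hℳ hT_inj hT_range hT hB hBT⟩

end TestSets

theorem exists_good_maximal_chain_general {X : Type*} [TopologicalSpace X] (P : X)
    (hFU : ∀ A : Set X, P ∈ closure A →
      ∃ a : ℕ → X, (∀ n, a n ∈ A) ∧ Tendsto a atTop (𝓝 P))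
    (hT1 : ∀ x : X, x ≠ P → ∃ U : Set X, IsOpen U ∧ P ∈ U ∧ x ∉ U) :
    ∃ C : Set (Set (ℕ → X)),
      (∀ A ∈ C, IsTestSet P A) ∧ IsChain (· ⊆ ·) C ∧
      (∀ C' : Set (Set (ℕ → X)),
        (∀ A ∈ C', IsTestSet P A) → IsChain (· ⊆ ·) C' → C ⊆ C' → C' = C) ∧
      IsTestSet P (⋂₀ C) := by
  obtain ⟨A, hA⟩ := exists_minimal_isTestSet hFU hT1
  obtain ⟨C, hAC, hCA, hC, hmax⟩ := exists_maximal_isChain_mem hA.1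
  exact ⟨C, hCA, hC, hmax, hA.sInter_eq_of_isChain hC hCA hAC ▸ hA.1⟩

/-- Existence of a good maximal chain: a maximal chain of test sets whose intersection
is itself a test set. -/
theorem exists_good_maximal_chain {X : Type*} [TopologicalSpace X] (P : X)
    (hFU : ∀ A : Set X, P ∈ closure A →
      ∃ a : ℕ → X, (∀ n, a n ∈ A) ∧ Tendsto a atTop (𝓝 P))
    (hT1 : ∀ x : X, x ≠ P → ∃ U : Set X, IsOpen U ∧ P ∈ U ∧ x ∉ U)
    (hni : ∀ U ∈ 𝓝 P, ∃ x ∈ U, x ≠ P)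
    (hD : ∃ f : X → ℝ, ¬ ContinuousAt f P) :
    ∃ C : Set (Set (ℕ → X)),
      (∀ A ∈ C, IsTestSet P A) ∧ IsChain (· ⊆ ·) C ∧
      (∀ C' : Set (Set (ℕ → X)),
        (∀ A ∈ C', IsTestSet P A) → IsChain (· ⊆ ·) C' → C ⊆ C' → C' = C) ∧
      IsTestSet P (⋂₀ C) :=
  exists_good_maximal_chain_general P hFU hT1
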